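/- arXiv:2102.04145 — 3 statements merged into one kernel-verified Lean document; each statement's English description precedes it below -/
import Mathlib

section
/- Let X ~ N(μ_k, σ_k² I) on ℝ^d, and for i ≠ k let L_i be the Gaussian density with mean μ_i and covariance σ_i² I. If ‖μ_k - μ_i‖² ≥ d·(σ_k² + σ_i²)·ln(2σ_k²/(σ_k²+σ_i²)), then E[L_k(X)] ≥ E[L_i(X)]. -/
open MeasureTheory Real

/-- Density of the isotropic Gaussian `N(μ, σ² I)` on `ℝ^d`. -/
noncomputable def gaussDensity (d : ℕ) (μ : EuclideanSpace ℝ (Fin d)) (σ : ℝ) :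
    EuclideanSpace ℝ (Fin d) → ℝ :=
  fun x => (2 * π * σ ^ 2) ^ (-(d : ℝ) / 2) * Real.exp (-‖x - μ‖ ^ 2 / (2 * σ ^ 2))

/-!
Completing the square, the product of the densities of `N(a, A I)` and `N(b, B I)` is
`(2π(A + B))^(-d/2) exp(-‖a - b‖² / (2(A + B)))` times a Gaussian density in `x`, so this constant
is `∫ Lₐ L_b`. For `a = b = μₖ` it equals `(4πσₖ²)^(-d/2)`; for `a = μᵢ`, `b = μₖ` the separation
hypothesis says precisely that its exponential factor is at most `(2σₖ² / (σₖ² + σᵢ²))^(-d/2)`,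
which turns it into the same value.
-/

section InnerProductSpace

variable {V : Type*} [NormedAddCommGroup V] [InnerProductSpace ℝ V]

theorem integral_rexp_neg_mul_sq_norm_sub [FiniteDimensional ℝ V] [MeasurableSpace V]
    [BorelSpace V] {t : ℝ} (ht : 0 < t) (c : V) :
    ∫ x : V, rexp (-t * ‖x - c‖ ^ 2) = (π / t) ^ (Module.finrank ℝ V / 2 : ℝ) := by
  rw [integral_sub_right_eq_self (fun x => rexp (-t * ‖x‖ ^ 2)) c,
    GaussianFourier.integral_rexp_neg_mul_sq_norm ht]

theorem neg_sq_norm_sub_div_add_neg_sq_norm_sub_div (x a b : V) {A B : ℝ}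
    (hA : 0 < A) (hB : 0 < B) :
    -‖x - a‖ ^ 2 / (2 * A) + -‖x - b‖ ^ 2 / (2 * B)
      = -‖a - b‖ ^ 2 / (2 * (A + B))
        + -((A + B) / (2 * A * B)) * ‖x - (A + B)⁻¹ • (B • a + A • b)‖ ^ 2 := by
  simp only [← real_inner_self_eq_norm_sq, inner_add_left, inner_add_right, inner_sub_left,
    inner_sub_right, real_inner_smul_left, real_inner_smul_right, real_inner_comm x a,
    real_inner_comm x b, real_inner_comm a b]
  field_simp
  ring

end InnerProductSpace

theorem rpow_neg_mul_rpow_neg_mul_div_rpow {x y z : ℝ} (hx : 0 < x) (hy : 0 < y) (hz : 0 < z)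
    (r : ℝ) :
    x ^ (-r) * y ^ (-r) * (x * y / z) ^ r = z ^ (-r) := by
  rw [rpow_neg hx.le, rpow_neg hy.le, rpow_neg hz.le, div_rpow (by positivity) hz.le,
    mul_rpow hx.le hy.le]
  have := rpow_pos_of_pos hx r
  have := rpow_pos_of_pos hy r
  have := rpow_pos_of_pos hz r
  field_simp

theorem exp_neg_div_le_rpow_neg {D s q c : ℝ} (hs : 0 < s) (hq : 0 < q)
    (h : c * s * log q ≤ D) : rexp (-D / (2 * s)) ≤ q ^ (-c / 2) := by
  rw [rpow_def_of_pos hq, exp_le_exp, div_le_iff₀ (by positivity)]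
  nlinarith

theorem integral_gaussDensity_mul_gaussDensity (d : ℕ) (a b : EuclideanSpace ℝ (Fin d))
    {σa σb : ℝ} (ha : σa ≠ 0) (hb : σb ≠ 0) :
    ∫ x, gaussDensity d a σa x * gaussDensity d b σb x
      = (2 * π * (σa ^ 2 + σb ^ 2)) ^ (-(d : ℝ) / 2)
        * rexp (-‖a - b‖ ^ 2 / (2 * (σa ^ 2 + σb ^ 2))) := by
  set A := σa ^ 2
  set B := σb ^ 2
  have hA : 0 < A := by positivity
  have hB : 0 < B := by positivity
  set c := (A + B)⁻¹ • (B • a + A • b)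
  have hprod : ∀ x, gaussDensity d a σa x * gaussDensity d b σb x
      = (2 * π * A) ^ (-(d : ℝ) / 2) * (2 * π * B) ^ (-(d : ℝ) / 2)
          * rexp (-‖a - b‖ ^ 2 / (2 * (A + B)))
        * rexp (-((A + B) / (2 * A * B)) * ‖x - c‖ ^ 2) := by
    intro x
    rw [mul_assoc, ← exp_add, gaussDensity, gaussDensity, mul_mul_mul_comm, ← exp_add,
      neg_sq_norm_sub_div_add_neg_sq_norm_sub_div x a b hA hB]
  simp_rw [hprod]
  rw [integral_const_mul, integral_rexp_neg_mul_sq_norm_sub (by positivity),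
    finrank_euclideanSpace_fin, mul_right_comm, neg_div,
    ← rpow_neg_mul_rpow_neg_mul_div_rpow (by positivity : 0 < 2 * π * A)
      (by positivity : 0 < 2 * π * B) (by positivity : 0 < 2 * π * (A + B))]
  congr 3
  field_simp

theorem mle_known_class_general (d : ℕ)
    (μk μi : EuclideanSpace ℝ (Fin d)) (σk σi : ℝ) (hσk : 0 < σk) (hσi : 0 < σi)
    (hsep : ‖μk - μi‖ ^ 2 ≥
      (d : ℝ) * (σk ^ 2 + σi ^ 2) * Real.log (2 * σk ^ 2 / (σk ^ 2 + σi ^ 2))) :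
    ∫ x, gaussDensity d μk σk x * gaussDensity d μk σk x ≥
      ∫ x, gaussDensity d μi σi x * gaussDensity d μk σk x := by
  rw [integral_gaussDensity_mul_gaussDensity d μk μk hσk.ne' hσk.ne',
    integral_gaussDensity_mul_gaussDensity d μi μk hσi.ne' hσk.ne', sub_self, norm_zero,
    zero_pow two_ne_zero, neg_zero, zero_div, exp_zero, mul_one, norm_sub_rev, add_comm (σi ^ 2)]
  have hs : 0 < σk ^ 2 + σi ^ 2 := by positivity
  calc (2 * π * (σk ^ 2 + σi ^ 2)) ^ (-(d : ℝ) / 2)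
        * rexp (-‖μk - μi‖ ^ 2 / (2 * (σk ^ 2 + σi ^ 2)))
      ≤ (2 * π * (σk ^ 2 + σi ^ 2)) ^ (-(d : ℝ) / 2)
        * (2 * σk ^ 2 / (σk ^ 2 + σi ^ 2)) ^ (-(d : ℝ) / 2) := by
        gcongr
        exact exp_neg_div_le_rpow_neg hs (by positivity) hsep
    _ = (2 * π * (σk ^ 2 + σk ^ 2)) ^ (-(d : ℝ) / 2) := by
        rw [← mul_rpow (by positivity) (by positivity)]
        congr 1
        field_simp
        ring

/-- Known-class separability condition of Theorem 3.1 (MLE): if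
`‖μₖ - μᵢ‖² ≥ d (σₖ² + σᵢ²) ln(2σₖ²/(σₖ²+σᵢ²))` then `E[Lₖ(X)] ≥ E[Lᵢ(X)]`
for `X ~ N(μₖ, σₖ² I)`. -/
theorem mle_known_class (d : ℕ) (hd : 1 ≤ d)
    (μk μi : EuclideanSpace ℝ (Fin d)) (σk σi : ℝ) (hσk : 0 < σk) (hσi : 0 < σi)
    (hsep : ‖μk - μi‖ ^ 2 ≥
      (d : ℝ) * (σk ^ 2 + σi ^ 2) * Real.log (2 * σk ^ 2 / (σk ^ 2 + σi ^ 2))) :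
    ∫ x, gaussDensity d μk σk x * gaussDensity d μk σk x ≥
      ∫ x, gaussDensity d μi σi x * gaussDensity d μk σk x :=
  mle_known_class_general d μk μi σk σi hσk hσi hsep
end

section
/- Let X ~ N(μ_u, σ_u² I) on ℝ^d, with mixture L_s(x) = P(X_u) L_u(x) + Σ_{j=1}^m P(X_j) L_j(x) where L_j are isotropic Gaussian densities, weights are nonnegative and sum to 1. Fix k ∈ {1,…,m} with P(X_u) > 0 and P(X_k) < 1. If ‖μ_k - μ_u‖²/(σ_k² + σ_u²) ≥ 2·ln((1 - P(X_k))/P(X_u)) + d·ln(2σ_u²/(σ_k²+σ_u²)), then E[L_s(X)] ≥ E[L_k(X)]. -/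
/-! The product of two isotropic Gaussian densities is, after completing the square, a constant
times another Gaussian density; integrating out, the overlap `C_i = ∫ L_i L_u` is the density of
`N(μ_u, (σ_i² + σ_u²) I)` evaluated at `μ_i`. Hence `E[L_s(X)] = Σ P_i C_i ≥ P_u C_u + P_k C_k`,
and the separation condition is the logarithmic form of `(1 - P_k) C_k ≤ P_u C_u`. -/

open MeasureTheory Real

section InnerProductSpace

variable {V : Type*} [NormedAddCommGroup V] [InnerProductSpace ℝ V]

theorem mul_norm_sub_sq_add_mul_norm_sub_sq {a b : ℝ} (hab : a + b ≠ 0) (x μ ν : V) :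
    a * ‖x - μ‖ ^ 2 + b * ‖x - ν‖ ^ 2 =
      (a + b) * ‖x - (a + b)⁻¹ • (a • μ + b • ν)‖ ^ 2 + a * b / (a + b) * ‖μ - ν‖ ^ 2 := by
  simp only [← real_inner_self_eq_norm_sq, inner_sub_left, inner_sub_right, inner_add_left,
    inner_add_right, real_inner_smul_left, real_inner_smul_right, real_inner_comm μ x,
    real_inner_comm ν x, real_inner_comm ν μ]
  field_simp
  ring

variable [FiniteDimensional ℝ V] [MeasurableSpace V] [BorelSpace V]

theorem integral_exp_neg_mul_norm_sub_sq {c : ℝ} (hc : 0 < c) (v : V) :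
    ∫ x : V, exp (-c * ‖x - v‖ ^ 2) = (π / c) ^ ((Module.finrank ℝ V : ℝ) / 2) := by
  rw [integral_sub_right_eq_self (fun x => exp (-c * ‖x‖ ^ 2)) v]
  exact GaussianFourier.integral_rexp_neg_mul_sq_norm hc

end InnerProductSpace

theorem mul_exp_neg_half_le {a q r n y : ℝ} (hq : 0 < q) (hr : 0 < r)
    (h : 2 * log (a / q) + n * log r ≤ y) : a * exp (-(y / 2)) ≤ q * r ^ (-n / 2) := by
  rcases le_or_gt a 0 with ha | ha
  · exact (mul_nonpos_of_nonpos_of_nonneg ha (exp_pos _).le).trans (by positivity)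
  rw [log_div ha.ne' hq.ne'] at h
  calc a * exp (-(y / 2)) = exp (log a - y / 2) := by rw [exp_sub, exp_log ha, exp_neg]; ring
    _ ≤ exp (log q + log r * (-n / 2)) := exp_le_exp.mpr (by linarith)
    _ = q * r ^ (-n / 2) := by rw [exp_add, exp_log hq, rpow_def_of_pos hr]

namespace gaussDensity

variable {d : ℕ}

theorem nonneg (μ : EuclideanSpace ℝ (Fin d)) (σ : ℝ) (x : EuclideanSpace ℝ (Fin d)) :
    0 ≤ gaussDensity d μ σ x := by
  unfold gaussDensity
  positivity

theorem apply_self (μ : EuclideanSpace ℝ (Fin d)) (σ : ℝ) :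
    gaussDensity d μ σ μ = (2 * π * σ ^ 2) ^ (-(d : ℝ) / 2) := by
  simp [gaussDensity]

theorem integral_eq_one (μ : EuclideanSpace ℝ (Fin d)) {σ : ℝ} (hσ : σ ≠ 0) :
    ∫ x, gaussDensity d μ σ x = 1 := by
  have hv : 0 < 2 * π * σ ^ 2 := by positivity
  have hexponent : ∀ x : EuclideanSpace ℝ (Fin d),
      -‖x - μ‖ ^ 2 / (2 * σ ^ 2) = -(2 * σ ^ 2)⁻¹ * ‖x - μ‖ ^ 2 := fun x => by ring
  simp only [gaussDensity, hexponent]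
  rw [integral_const_mul, integral_exp_neg_mul_norm_sub_sq (by positivity),
    finrank_euclideanSpace_fin, div_inv_eq_mul, ← mul_assoc, mul_comm π 2, neg_div, rpow_neg hv.le,
    inv_mul_cancel₀ (rpow_pos_of_pos hv _).ne']

theorem integrable (μ : EuclideanSpace ℝ (Fin d)) {σ : ℝ} (hσ : σ ≠ 0) :
    Integrable (gaussDensity d μ σ) :=
  integrable_of_integral_eq_one (integral_eq_one μ hσ)

theorem mul_eq (μ ν : EuclideanSpace ℝ (Fin d)) {s t : ℝ} (hs : s ≠ 0) (ht : t ≠ 0)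
    (x : EuclideanSpace ℝ (Fin d)) :
    gaussDensity d μ s x * gaussDensity d ν t x =
      gaussDensity d ν √(s ^ 2 + t ^ 2) μ *
        gaussDensity d ((s ^ 2 + t ^ 2)⁻¹ • (t ^ 2 • μ + s ^ 2 • ν))
          (s * t / √(s ^ 2 + t ^ 2)) x := by
  have hv : 0 < s ^ 2 + t ^ 2 := by positivity
  have hsqrt : √(s ^ 2 + t ^ 2) ^ 2 = s ^ 2 + t ^ 2 := sq_sqrt hv.le
  have hsq : (s * t / √(s ^ 2 + t ^ 2)) ^ 2 = s ^ 2 * t ^ 2 / (s ^ 2 + t ^ 2) := by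
    rw [div_pow, hsqrt, mul_pow]
  have hsquare := mul_norm_sub_sq_add_mul_norm_sub_sq (by positivity : t ^ 2 + s ^ 2 ≠ 0) x μ ν
  rw [add_comm (t ^ 2) (s ^ 2)] at hsquare
  simp only [gaussDensity, hsqrt, hsq]
  rw [mul_mul_mul_comm, ← exp_add, ← mul_rpow (by positivity) (by positivity)]
  conv_rhs => rw [mul_mul_mul_comm, ← exp_add, ← mul_rpow (by positivity) (by positivity)]
  congr 2
  · field_simp
  · generalize ‖x - (s ^ 2 + t ^ 2)⁻¹ • (t ^ 2 • μ + s ^ 2 • ν)‖ ^ 2 = A at hsquare ⊢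
    field_simp
    field_simp at hsquare
    linear_combination -hsquare

theorem integrable_mul (μ ν : EuclideanSpace ℝ (Fin d)) {s t : ℝ} (hs : s ≠ 0) (ht : t ≠ 0) :
    Integrable fun x => gaussDensity d μ s x * gaussDensity d ν t x := by
  simp_rw [mul_eq μ ν hs ht]
  exact (integrable _ (by positivity)).const_mul _

theorem integral_mul (μ ν : EuclideanSpace ℝ (Fin d)) {s t : ℝ} (hs : s ≠ 0) (ht : t ≠ 0) :
    ∫ x, gaussDensity d μ s x * gaussDensity d ν t x = gaussDensity d ν √(s ^ 2 + t ^ 2) μ := by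
  simp_rw [mul_eq μ ν hs ht]
  rw [integral_const_mul, integral_eq_one _ (by positivity), mul_one]

theorem mul_apply_le_mul_apply_self {a q σ τ : ℝ} (hq : 0 < q) (hσ : σ ≠ 0) (hτ : τ ≠ 0)
    (μ ν x : EuclideanSpace ℝ (Fin d))
    (h : 2 * log (a / q) + d * log (τ ^ 2 / σ ^ 2) ≤ ‖x - μ‖ ^ 2 / σ ^ 2) :
    a * gaussDensity d μ σ x ≤ q * gaussDensity d ν τ ν := by
  have hpeak : gaussDensity d ν τ ν =
      (2 * π * σ ^ 2) ^ (-(d : ℝ) / 2) * (τ ^ 2 / σ ^ 2) ^ (-(d : ℝ) / 2) := by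
    rw [apply_self, ← mul_rpow (by positivity) (by positivity)]
    field_simp
  have hexponent : -‖x - μ‖ ^ 2 / (2 * σ ^ 2) = -(‖x - μ‖ ^ 2 / σ ^ 2 / 2) := by ring
  rw [hpeak, gaussDensity, hexponent, mul_left_comm, mul_left_comm q]
  exact mul_le_mul_of_nonneg_left (mul_exp_neg_half_le hq (by positivity) h) (by positivity)

end gaussDensity

/-- The index `none` is the unknown class `u`. -/
theorem mle_unknown_class_general (d m : ℕ)
    (μ : Option (Fin m) → EuclideanSpace ℝ (Fin d))
    (σ : Option (Fin m) → ℝ) (hσ : ∀ i, 0 < σ i)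
    (P : Option (Fin m) → ℝ) (hP : ∀ i, 0 ≤ P i)
    (k : Fin m) (hPu : 0 < P none)
    (hsep : ‖μ (some k) - μ none‖ ^ 2 / ((σ (some k)) ^ 2 + (σ none) ^ 2) ≥
      2 * Real.log ((1 - P (some k)) / P none) +
        (d : ℝ) * Real.log (2 * (σ none) ^ 2 / ((σ (some k)) ^ 2 + (σ none) ^ 2))) :
    ∫ x, (∑ i, P i * gaussDensity d (μ i) (σ i) x) *
        gaussDensity d (μ none) (σ none) x ≥
      ∫ x, gaussDensity d (μ (some k)) (σ (some k)) x *
        gaussDensity d (μ none) (σ none) x := by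
  set C : Option (Fin m) → ℝ := fun i => gaussDensity d (μ none) √(σ i ^ 2 + σ none ^ 2) (μ i)
  have hoverlap (i) :
      ∫ x, gaussDensity d (μ i) (σ i) x * gaussDensity d (μ none) (σ none) x = C i :=
    gaussDensity.integral_mul _ _ (hσ i).ne' (hσ none).ne'
  have hmixture : ∫ x, (∑ i, P i * gaussDensity d (μ i) (σ i) x) *
      gaussDensity d (μ none) (σ none) x = ∑ i, P i * C i := by
    simp_rw [Finset.sum_mul, mul_assoc]
    rw [integral_finsetSum _ fun i _ =>
      (gaussDensity.integrable_mul _ _ (hσ i).ne' (hσ none).ne').const_mul (P i)]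
    simp_rw [integral_const_mul, hoverlap]
  have hvar (i) : 0 < σ i ^ 2 + σ none ^ 2 := by have := hσ i; positivity
  have hsqrt (i) : √(σ i ^ 2 + σ none ^ 2) ^ 2 = σ i ^ 2 + σ none ^ 2 := sq_sqrt (hvar i).le
  have hkey : (1 - P (some k)) * C (some k) ≤ P none * C none := by
    refine gaussDensity.mul_apply_le_mul_apply_self hPu (sqrt_pos.mpr (hvar _)).ne'
      (sqrt_pos.mpr (hvar _)).ne' _ _ _ ?_
    rw [hsqrt, hsqrt, ← two_mul]
    exact hsep
  have hpair : P none * C none + P (some k) * C (some k) ≤ ∑ i, P i * C i :=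
    Finset.add_le_sum (f := fun i => P i * C i)
      (fun i _ => mul_nonneg (hP i) (gaussDensity.nonneg _ _ _)) (Finset.mem_univ _)
      (Finset.mem_univ _) (Option.some_ne_none k).symm
  rw [hmixture, hoverlap]
  linarith

/-- Unknown-class case of Theorem 3.1 (MLE): the index type `Option (Fin m)` encodes the
classes `{1,…,m, u}`, where `none` is the u.u. class `u`. For `X ~ N(μᵤ, σᵤ² I)` and
mixture `L_s = Σ P(Xᵢ) Lᵢ`, under the stated separability condition,
`E[L_s(X)] ≥ E[Lₖ(X)]`. -/
theorem mle_unknown_class (d m : ℕ) (hd : 1 ≤ d)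
    (μ : Option (Fin m) → EuclideanSpace ℝ (Fin d))
    (σ : Option (Fin m) → ℝ) (hσ : ∀ i, 0 < σ i)
    (P : Option (Fin m) → ℝ) (hP : ∀ i, 0 ≤ P i) (hPsum : ∑ i, P i = 1)
    (k : Fin m) (hPu : 0 < P none) (hPk : P (some k) < 1)
    (hsep : ‖μ (some k) - μ none‖ ^ 2 / ((σ (some k)) ^ 2 + (σ none) ^ 2) ≥
      2 * Real.log ((1 - P (some k)) / P none) +
        (d : ℝ) * Real.log (2 * (σ none) ^ 2 / ((σ (some k)) ^ 2 + (σ none) ^ 2))) :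
    ∫ x, (∑ i, P i * gaussDensity d (μ i) (σ i) x) *
        gaussDensity d (μ none) (σ none) x ≥
      ∫ x, gaussDensity d (μ (some k)) (σ (some k)) x *
        gaussDensity d (μ none) (σ none) x :=
  mle_unknown_class_general d m μ σ hσ P hP k hPu hsep
end

section
/- Let X ~ N(μ_u, σ_u² I) on ℝ^d, and let L_s(x) = P(X_u) L_u(x) + Σ_{j=1}^m P(X_j) L_j(x) be a mixture of isotropic Gaussian densities with nonnegative weights summing to 1. Fix k ∈ {1,…,m}, positive priors P'(X_k), P'(X_s) with P'(X_k) > P'(X_s)·P(X_k) and P(X_u) > 0. If ‖μ_k - μ_u‖²/(σ_k² + σ_u²) ≥ 2·ln((P'(X_k) - P'(X_s)P(X_k))/(P'(X_s)P(X_u))) + d·ln(2σ_u²/(σ_k²+σ_u²)), then P'(X_s)·E[L_s(X)] ≥ P'(X_k)·E[L_k(X)]. -/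
/-!
Completing the square shows that `L_i · L_u` is a Gaussian density in `x` times the density of
`N(μ_u, (σ_i² + σ_u²) I)` at `μ_i`; call the latter `G_i`, so that `E[L_i(X)] = G_i` and
`E[L_s(X)] = ∑ P(X_i) G_i ≥ P(X_k) G_k + P(X_u) G_u`. Taking logarithms, the separability
condition says exactly `(P'(X_k) - P'(X_s) P(X_k)) G_k ≤ P'(X_s) P(X_u) G_u`, which rearranges
to the claim.
-/

open MeasureTheory Real

section CompleteSquare

variable {V : Type*} [NormedAddCommGroup V] [InnerProductSpace ℝ V]

theorem norm_sub_sq_div_add_norm_sub_sq_div {s t : ℝ} (hs : 0 < s) (ht : 0 < t) (μ ν x : V) :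
    ‖x - μ‖ ^ 2 / s + ‖x - ν‖ ^ 2 / t =
      ‖μ - ν‖ ^ 2 / (s + t) +
        ‖x - ((t / (s + t)) • μ + (s / (s + t)) • ν)‖ ^ 2 / (s * t / (s + t)) := by
  have hst : s + t ≠ 0 := by positivity
  rw [norm_sub_sq_real x μ, norm_sub_sq_real x ν, norm_sub_sq_real μ ν, norm_sub_sq_real x,
    inner_add_right, real_inner_smul_right, real_inner_smul_right, norm_add_sq_real,
    real_inner_smul_left, real_inner_smul_right, norm_smul, norm_smul, mul_pow, mul_pow,
    Real.norm_eq_abs, Real.norm_eq_abs, sq_abs, sq_abs]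
  field_simp
  ring

end CompleteSquare

section GaussDensity

variable {d : ℕ}

local notation "E" => EuclideanSpace ℝ (Fin d)

theorem gaussDensity_pos {σ : ℝ} (hσ : σ ≠ 0) (μ x : E) : 0 < gaussDensity d μ σ x := by
  unfold gaussDensity
  positivity

theorem log_gaussDensity {σ : ℝ} (hσ : σ ≠ 0) (μ x : E) :
    log (gaussDensity d μ σ x) = -(d / 2) * log (2 * π * σ ^ 2) - ‖x - μ‖ ^ 2 / (2 * σ ^ 2) := by
  unfold gaussDensity
  rw [log_mul (by positivity) (exp_pos _).ne', log_rpow (by positivity), log_exp]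
  ring

theorem integral_gaussDensity {σ : ℝ} (hσ : σ ≠ 0) (μ : E) : ∫ x, gaussDensity d μ σ x = 1 := by
  have hb : 0 < 1 / (2 * σ ^ 2) := by positivity
  have hexp : ∀ y : E, exp (-‖y‖ ^ 2 / (2 * σ ^ 2)) = exp (-(1 / (2 * σ ^ 2)) * ‖y‖ ^ 2) :=
    fun y => by ring_nf
  unfold gaussDensity
  rw [integral_const_mul, integral_sub_right_eq_self (fun y => exp (-‖y‖ ^ 2 / (2 * σ ^ 2))),
    funext hexp, GaussianFourier.integral_rexp_neg_mul_sq_norm hb, finrank_euclideanSpace_fin,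
    show π / (1 / (2 * σ ^ 2)) = 2 * π * σ ^ 2 by field_simp, neg_div, rpow_neg (by positivity)]
  exact inv_mul_cancel₀ (by positivity)

theorem gaussDensity_mul_gaussDensity {σ₁ σ₂ : ℝ} (h₁ : σ₁ ≠ 0) (h₂ : σ₂ ≠ 0) (μ₁ μ₂ x : E) :
    gaussDensity d μ₁ σ₁ x * gaussDensity d μ₂ σ₂ x =
      gaussDensity d μ₂ √(σ₁ ^ 2 + σ₂ ^ 2) μ₁ *
        gaussDensity d ((σ₂ ^ 2 / (σ₁ ^ 2 + σ₂ ^ 2)) • μ₁ + (σ₁ ^ 2 / (σ₁ ^ 2 + σ₂ ^ 2)) • μ₂)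
          (σ₁ * σ₂ / √(σ₁ ^ 2 + σ₂ ^ 2)) x := by
  have hs : 0 < σ₁ ^ 2 + σ₂ ^ 2 := by positivity
  have hτ : (σ₁ * σ₂ / √(σ₁ ^ 2 + σ₂ ^ 2)) ^ 2 = σ₁ ^ 2 * σ₂ ^ 2 / (σ₁ ^ 2 + σ₂ ^ 2) := by
    rw [div_pow, sq_sqrt hs.le, mul_pow]
  unfold gaussDensity
  rw [hτ, sq_sqrt hs.le, mul_mul_mul_comm, mul_mul_mul_comm _ (exp _), ← exp_add, ← exp_add,
    ← mul_rpow (by positivity) (by positivity), ← mul_rpow (by positivity) (by positivity)]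
  congr 2
  · field_simp
  · have hsq := norm_sub_sq_div_add_norm_sub_sq_div (by positivity : 0 < σ₁ ^ 2)
      (by positivity : 0 < σ₂ ^ 2) μ₁ μ₂ x
    simp only [div_mul_eq_div_div_swap]
    linear_combination -hsq / 2

theorem integral_gaussDensity_mul_gaussDensity_s8 {σ₁ σ₂ : ℝ} (h₁ : σ₁ ≠ 0) (h₂ : σ₂ ≠ 0)
    (μ₁ μ₂ : E) :
    ∫ x, gaussDensity d μ₁ σ₁ x * gaussDensity d μ₂ σ₂ x =
      gaussDensity d μ₂ √(σ₁ ^ 2 + σ₂ ^ 2) μ₁ := by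
  have hτ : σ₁ * σ₂ / √(σ₁ ^ 2 + σ₂ ^ 2) ≠ 0 := by
    have : 0 < σ₁ ^ 2 + σ₂ ^ 2 := by positivity
    positivity
  simp only [gaussDensity_mul_gaussDensity h₁ h₂, integral_const_mul, integral_gaussDensity hτ,
    mul_one]

theorem integrable_gaussDensity_mul_gaussDensity {σ₁ σ₂ : ℝ} (h₁ : σ₁ ≠ 0) (h₂ : σ₂ ≠ 0)
    (μ₁ μ₂ : E) :
    Integrable fun x => gaussDensity d μ₁ σ₁ x * gaussDensity d μ₂ σ₂ x :=
  .of_integral_ne_zero <| by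
    rw [integral_gaussDensity_mul_gaussDensity_s8 h₁ h₂]
    exact (gaussDensity_pos (by positivity) _ _).ne'

theorem integral_sum_mul_gaussDensity {ι : Type*} (s : Finset ι) (w : ι → ℝ) (μ : ι → E)
    {σ : ι → ℝ} (hσ : ∀ i ∈ s, σ i ≠ 0) (ν : E) {τ : ℝ} (hτ : τ ≠ 0) :
    ∫ x, (∑ i ∈ s, w i * gaussDensity d (μ i) (σ i) x) * gaussDensity d ν τ x =
      ∑ i ∈ s, w i * gaussDensity d ν √(σ i ^ 2 + τ ^ 2) (μ i) := by
  simp only [Finset.sum_mul, mul_assoc]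
  rw [integral_finsetSum s fun i hi =>
    (integrable_gaussDensity_mul_gaussDensity (hσ i hi) hτ _ _).const_mul _]
  refine Finset.sum_congr rfl fun i hi => ?_
  rw [integral_const_mul, integral_gaussDensity_mul_gaussDensity_s8 (hσ i hi) hτ]

theorem mul_gaussDensity_le_mul_gaussDensity_self {a b σ τ : ℝ} (ha : 0 < a) (hb : 0 < b)
    (hσ : σ ≠ 0) (hτ : τ ≠ 0) (μ ν x : E)
    (h : 2 * log (a / b) + d * log (τ ^ 2 / σ ^ 2) ≤ ‖x - μ‖ ^ 2 / σ ^ 2) :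
    a * gaussDensity d μ σ x ≤ b * gaussDensity d ν τ ν := by
  rw [← log_le_log_iff (mul_pos ha (gaussDensity_pos hσ _ _))
    (mul_pos hb (gaussDensity_pos hτ _ _)), log_mul ha.ne' (gaussDensity_pos hσ _ _).ne',
    log_mul hb.ne' (gaussDensity_pos hτ _ _).ne', log_gaussDensity hσ, log_gaussDensity hτ,
    sub_self, norm_zero, zero_pow two_ne_zero, zero_div]
  rw [log_div ha.ne' hb.ne', log_div (by positivity) (by positivity)] at h
  have hlogσ : log (2 * π * σ ^ 2) = log (2 * π) + log (σ ^ 2) :=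
    log_mul (by positivity) (by positivity)
  have hlogτ : log (2 * π * τ ^ 2) = log (2 * π) + log (τ ^ 2) :=
    log_mul (by positivity) (by positivity)
  have hhalf : ‖x - μ‖ ^ 2 / (2 * σ ^ 2) = ‖x - μ‖ ^ 2 / σ ^ 2 / 2 := by ring
  rw [hlogσ, hlogτ]
  linarith

end GaussDensity

/-- The index type `Option (Fin m)` encodes `{1,…,m,u}` with `none = u`. -/
theorem bayes_unknown_class_general (d m : ℕ)
    (μ : Option (Fin m) → EuclideanSpace ℝ (Fin d))
    (σ : Option (Fin m) → ℝ) (hσ : ∀ i, 0 < σ i)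
    (P : Option (Fin m) → ℝ) (hP : ∀ i, 0 ≤ P i)
    (k : Fin m) (Pk' Ps' : ℝ) (hPs' : 0 < Ps')
    (hPu : 0 < P none) (hgap : Ps' * P (some k) < Pk')
    (hsep : ‖μ (some k) - μ none‖ ^ 2 / ((σ (some k)) ^ 2 + (σ none) ^ 2) ≥
      2 * Real.log ((Pk' - Ps' * P (some k)) / (Ps' * P none)) +
        (d : ℝ) * Real.log (2 * (σ none) ^ 2 / ((σ (some k)) ^ 2 + (σ none) ^ 2))) :
    Ps' * ∫ x, (∑ i, P i * gaussDensity d (μ i) (σ i) x) *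
        gaussDensity d (μ none) (σ none) x ≥
      Pk' * ∫ x, gaussDensity d (μ (some k)) (σ (some k)) x *
        gaussDensity d (μ none) (σ none) x := by
  have hσ₀ : ∀ i, σ i ≠ 0 := fun i => (hσ i).ne'
  rw [integral_sum_mul_gaussDensity _ _ _ (fun i _ => hσ₀ i) _ (hσ₀ none),
    integral_gaussDensity_mul_gaussDensity_s8 (hσ₀ _) (hσ₀ none)]
  set G : Option (Fin m) → ℝ := fun i => gaussDensity d (μ none) √(σ i ^ 2 + σ none ^ 2) (μ i)
  have hvar : ∀ i, 0 < σ i ^ 2 + σ none ^ 2 := fun i => by have := hσ i; positivity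
  have hpair : P (some k) * G (some k) + P none * G none ≤ ∑ i, P i * G i :=
    Finset.add_le_sum (f := fun i => P i * G i)
      (fun i _ => mul_nonneg (hP i) (gaussDensity_pos (sqrt_ne_zero'.2 (hvar i)) _ _).le)
      (Finset.mem_univ _) (Finset.mem_univ _) (Option.some_ne_none k)
  have hkey : (Pk' - Ps' * P (some k)) * G (some k) ≤ Ps' * P none * G none := by
    refine mul_gaussDensity_le_mul_gaussDensity_self (sub_pos.2 hgap) (by positivity)
      (sqrt_ne_zero'.2 (hvar _)) (sqrt_ne_zero'.2 (hvar _)) _ _ _ ?_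
    rw [sq_sqrt (hvar _).le, sq_sqrt (hvar _).le, ← two_mul]
    exact hsep
  linarith [mul_le_mul_of_nonneg_left hpair hPs'.le]

/-- Unknown-class case of Theorem 3.2 (Bayesian classification). The index type
`Option (Fin m)` encodes `{1,…,m,u}` with `none = u`. For `X ~ N(μᵤ, σᵤ² I)`,
priors `P'(Xₖ), P'(X_s) > 0` with `P'(Xₖ) > P'(X_s)·P(Xₖ)` and `P(Xᵤ) > 0`, the stated
separability condition implies `P'(X_s)·E[L_s(X)] ≥ P'(Xₖ)·E[Lₖ(X)]`. -/
theorem bayes_unknown_class (d m : ℕ) (hd : 1 ≤ d)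
    (μ : Option (Fin m) → EuclideanSpace ℝ (Fin d))
    (σ : Option (Fin m) → ℝ) (hσ : ∀ i, 0 < σ i)
    (P : Option (Fin m) → ℝ) (hP : ∀ i, 0 ≤ P i) (hPsum : ∑ i, P i = 1)
    (k : Fin m) (Pk' Ps' : ℝ) (hPk' : 0 < Pk') (hPs' : 0 < Ps')
    (hPu : 0 < P none) (hgap : Ps' * P (some k) < Pk')
    (hsep : ‖μ (some k) - μ none‖ ^ 2 / ((σ (some k)) ^ 2 + (σ none) ^ 2) ≥
      2 * Real.log ((Pk' - Ps' * P (some k)) / (Ps' * P none)) +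
        (d : ℝ) * Real.log (2 * (σ none) ^ 2 / ((σ (some k)) ^ 2 + (σ none) ^ 2))) :
    Ps' * ∫ x, (∑ i, P i * gaussDensity d (μ i) (σ i) x) *
        gaussDensity d (μ none) (σ none) x ≥
      Pk' * ∫ x, gaussDensity d (μ (some k)) (σ (some k)) x *
        gaussDensity d (μ none) (σ none) x :=
  bayes_unknown_class_general d m μ σ hσ P hP k Pk' Ps' hPs' hPu hgap hsep
end
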